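/- arXiv:2102.05184 — 2 statements merged into one kernel-verified Lean document; each statement's English description precedes it below -/
import Mathlib

section
/- Let H be a separable Hilbert space, let (T_n) be a nondecreasing sequence of nonnegative self-adjoint trace-class operators on H with sup_n trace(T_n) < ∞. Then there exists a nonnegative self-adjoint trace-class operator T such that T_n → T weakly and trace(T_n) → trace(T). -/
/-!
By Parseval applied to `√S x`, the quadratic form of a positive operator `S` is bounded by
`trace S · ‖x‖²`; so the forms `⟪x, Tₙ x⟫` increase to a finite limit, uniformly bounded by
`C ‖x‖²` with `C` the bound on the traces. For `n ≤ m`, the same square-root argument applied to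
the positive operator `Tₘ - Tₙ` gives `‖(Tₘ - Tₙ) y‖² ≤ C ⟪y, (Tₘ - Tₙ) y⟫`, so `Tₙ y` is Cauchy:
the sequence converges strongly, to an operator that is bounded by Banach–Steinhaus and positive
as a limit of positive ones. Its diagonal entries in the basis are the increasing limits of those
of `Tₙ`, and monotone convergence for sums identifies its trace with `sup tr = lim tr`.
-/

open Filter Topology
open scoped ComplexInnerProductSpace InnerProductSpace

theorem cauchySeq_of_dist_sq_le_sub {α : Type*} [PseudoMetricSpace α] {u : ℕ → α} {a : ℕ → ℝ}
    (ha : CauchySeq a) {C : ℝ} (h : ∀ n m, n ≤ m → dist (u n) (u m) ^ 2 ≤ C * (a m - a n)) :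
    CauchySeq u := by
  have hdist : ∀ n m, dist (u n) (u m) ≤ √(|C| * dist (a n) (a m)) := by
    have key : ∀ n m, n ≤ m → dist (u n) (u m) ≤ √(|C| * dist (a n) (a m)) := fun n m hnm =>
      (le_abs_self _).trans <| Real.abs_le_sqrt <| (h n m hnm).trans <| by
        rw [Real.dist_eq, abs_sub_comm, ← abs_mul]
        exact le_abs_self _
    intro n m
    rcases le_total n m with hnm | hmn
    · exact key n m hnm
    · rw [dist_comm, dist_comm (a n)]
      exact key m n hmn
  rw [cauchySeq_iff_tendsto_dist_atTop_0] at ha ⊢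
  have hlim : Tendsto (fun p : ℕ × ℕ => √(|C| * dist (a p.1) (a p.2))) atTop (𝓝 0) := by
    simpa using ((ha.const_mul |C|).sqrt)
  exact squeeze_zero (fun _ => dist_nonneg) (fun p => hdist p.1 p.2) hlim

theorem hasSum_iSup_of_monotone {ι : Type*} {f : ℕ → ι → ℝ} {g : ι → ℝ} {s : ℕ → ℝ}
    (hf0 : ∀ n i, 0 ≤ f n i) (hf : Monotone f)
    (hg : ∀ i, Tendsto (fun n => f n i) atTop (𝓝 (g i)))
    (hs : ∀ n, HasSum (f n) (s n)) (hbdd : BddAbove (Set.range s)) :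
    HasSum g (⨆ n, s n) := by
  have hfg : ∀ n, f n ≤ g := fun n i =>
    ge_of_tendsto (hg i) (eventually_atTop.2 ⟨n, fun m hm => hf hm i⟩)
  refine hasSum_of_isLUB_of_nonneg _ (fun i => (hf0 0 i).trans (hfg 0 i)) ⟨?_, ?_⟩
  · rintro _ ⟨t, rfl⟩
    refine le_of_tendsto' (tendsto_finsetSum t fun i _ => hg i) fun n => ?_
    exact (sum_le_hasSum t (fun i _ => hf0 n i) (hs n)).trans (le_ciSup hbdd n)
  · rintro w hw
    exact ciSup_le fun n => hasSum_le_of_sum_le (hs n) fun t =>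
      (Finset.sum_le_sum fun i _ => hfg n i).trans (hw ⟨t, rfl⟩)

theorem HilbertBasis.hasSum_norm_inner_sq {ι 𝕜 E : Type*} [RCLike 𝕜] [NormedAddCommGroup E]
    [InnerProductSpace 𝕜 E] (b : HilbertBasis ι 𝕜 E) (x : E) :
    HasSum (fun i => ‖⟪b i, x⟫_𝕜‖ ^ 2) (‖x‖ ^ 2) := by
  have hterm : ∀ i, ⟪x, b i⟫_𝕜 * ⟪b i, x⟫_𝕜 = ((‖⟪b i, x⟫_𝕜‖ ^ 2 : ℝ) : 𝕜) := fun i => by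
    rw [← inner_conj_symm, RCLike.conj_mul, RCLike.ofReal_pow]
  rw [← RCLike.hasSum_ofReal 𝕜, ← funext hterm, RCLike.ofReal_pow, ← inner_self_eq_norm_sq_to_K]
  exact b.hasSum_inner_mul_inner x x

namespace ContinuousLinearMap

section RCLike

variable {𝕜 E : Type*} [RCLike 𝕜] [NormedAddCommGroup E] [InnerProductSpace 𝕜 E]

theorem le_of_forall_re_inner_le [CompleteSpace E] {S T : E →L[𝕜] E} (hS : IsSelfAdjoint S)
    (hT : IsSelfAdjoint T) (h : ∀ x, RCLike.re ⟪x, S x⟫_𝕜 ≤ RCLike.re ⟪x, T x⟫_𝕜) : S ≤ T := by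
  refine (le_def S T).2 (isPositive_def'.2 ⟨hT.sub hS, fun x => ?_⟩)
  rw [reApplyInnerSelf_apply, inner_re_symm, sub_apply, inner_sub_right, map_sub, sub_nonneg]
  exact h x

theorem isPositive_of_tendsto_apply {α : Type*} {l : Filter α} [l.NeBot] {T : α → E →L[𝕜] E}
    {L : E →L[𝕜] E} (hT : ∀ a, (T a).IsPositive)
    (hL : ∀ y, Tendsto (fun a => T a y) l (𝓝 (L y))) : L.IsPositive := by
  refine isPositive_def.2 ⟨fun x y => ?_, fun x => ?_⟩
  · refine tendsto_nhds_unique ((hL x).inner tendsto_const_nhds) ?_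
    simpa only [coe_coe, (hT _).inner_left_eq_inner_right] using tendsto_const_nhds.inner (hL y)
  · have hlim : Tendsto (fun a => RCLike.re ⟪T a x, x⟫_𝕜) l (𝓝 (L.reApplyInnerSelf x)) :=
      (RCLike.continuous_re.tendsto _).comp ((hL x).inner tendsto_const_nhds)
    exact ge_of_tendsto hlim (.of_forall fun a => (hT a).re_inner_nonneg_left x)

end RCLike

variable {H : Type*} [NormedAddCommGroup H] [InnerProductSpace ℂ H] [CompleteSpace H]

theorem IsPositive.norm_sqrt_apply_sq {S : H →L[ℂ] H} (hS : S.IsPositive) (z : H) :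
    ‖CFC.sqrt S z‖ ^ 2 = (⟪z, S z⟫).re := by
  have hR : IsSelfAdjoint (CFC.sqrt S) := (CFC.sqrt_nonneg S).isSelfAdjoint
  calc ‖CFC.sqrt S z‖ ^ 2 = (⟪CFC.sqrt S z, CFC.sqrt S z⟫).re :=
        (inner_self_eq_norm_sq (𝕜 := ℂ) _).symm
    _ = (⟪z, (CFC.sqrt S * CFC.sqrt S) z⟫).re := by
        rw [mul_apply_eq_comp, ← adjoint_inner_right, hR.adjoint_eq]
    _ = (⟪z, S z⟫).re := by rw [CFC.sqrt_mul_sqrt_self S ((nonneg_iff_isPositive S).2 hS)]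

theorem IsPositive.re_inner_le_of_hasSum {ι : Type*} (e : HilbertBasis ι ℂ H) {S : H →L[ℂ] H}
    (hS : S.IsPositive) {t : ℝ} (ht : HasSum (fun i => (⟪e i, S (e i)⟫).re) t) (z : H) :
    (⟪z, S z⟫).re ≤ t * ‖z‖ ^ 2 := by
  have hR : IsSelfAdjoint (CFC.sqrt S) := (CFC.sqrt_nonneg S).isSelfAdjoint
  rw [← hS.norm_sqrt_apply_sq]
  refine hasSum_le (fun i => ?_) (e.hasSum_norm_inner_sq _) (ht.mul_right _)
  calc ‖⟪e i, CFC.sqrt S z⟫‖ ^ 2 = ‖⟪CFC.sqrt S (e i), z⟫‖ ^ 2 := by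
        rw [← adjoint_inner_left, hR.adjoint_eq]
    _ ≤ (‖CFC.sqrt S (e i)‖ * ‖z‖) ^ 2 := by gcongr; exact norm_inner_le_norm _ _
    _ = (⟪e i, S (e i)⟫).re * ‖z‖ ^ 2 := by rw [mul_pow, hS.norm_sqrt_apply_sq]

theorem IsPositive.norm_apply_sq_le {S : H →L[ℂ] H} (hS : S.IsPositive) {C : ℝ}
    (hC : ∀ z, (⟪z, S z⟫).re ≤ C * ‖z‖ ^ 2) (y : H) :
    ‖S y‖ ^ 2 ≤ C * (⟪y, S y⟫).re := by
  have hSy : S y = CFC.sqrt S (CFC.sqrt S y) := by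
    rw [← mul_apply_eq_comp, CFC.sqrt_mul_sqrt_self S ((nonneg_iff_isPositive S).2 hS)]
  calc ‖S y‖ ^ 2 = (⟪CFC.sqrt S y, S (CFC.sqrt S y)⟫).re := by
        rw [← hS.norm_sqrt_apply_sq, ← hSy]
    _ ≤ C * ‖CFC.sqrt S y‖ ^ 2 := hC _
    _ = C * (⟪y, S y⟫).re := by rw [hS.norm_sqrt_apply_sq]

theorem exists_tendsto_apply_of_monotone {T : ℕ → H →L[ℂ] H} (hT : Monotone T) (h0 : 0 ≤ T 0)
    {C : ℝ} (hC : ∀ n z, (⟪z, T n z⟫).re ≤ C * ‖z‖ ^ 2) :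
    ∃ L : H →L[ℂ] H, ∀ y, Tendsto (fun n => T n y) atTop (𝓝 (L y)) := by
  have re_inner_sub (n m : ℕ) (z : H) :
      (⟪z, (T m - T n) z⟫).re = (⟪z, T m z⟫).re - (⟪z, T n z⟫).re := by
    rw [sub_apply, inner_sub_right, Complex.sub_re]
  have hpos (n : ℕ) : (T n).IsPositive :=
    (nonneg_iff_isPositive _).1 (h0.trans (hT n.zero_le))
  have hcauchy (y : H) : CauchySeq fun n => T n y := by
    have hq : Monotone fun n => (⟪y, T n y⟫).re := fun n m hnm => by
      have := ((le_def _ _).1 (hT hnm)).re_inner_nonneg_right y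
      rwa [RCLike.re_to_complex, re_inner_sub, sub_nonneg] at this
    have hq_bdd : BddAbove (Set.range fun n => (⟪y, T n y⟫).re) :=
      ⟨C * ‖y‖ ^ 2, Set.forall_mem_range.2 fun n => hC n y⟩
    refine cauchySeq_of_dist_sq_le_sub (tendsto_atTop_ciSup hq hq_bdd).cauchySeq
      (C := C) fun n m hnm => ?_
    have hbound : ∀ z, (⟪z, (T m - T n) z⟫).re ≤ C * ‖z‖ ^ 2 := fun z => by
      rw [re_inner_sub]
      linarith [hC m z, RCLike.re_to_complex ▸ (hpos n).re_inner_nonneg_right z]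
    have := ((le_def _ _).1 (hT hnm)).norm_apply_sq_le hbound y
    rwa [re_inner_sub, sub_apply, ← dist_eq_norm, dist_comm] at this
  choose g hg using fun y => cauchySeq_tendsto_of_complete (hcauchy y)
  exact ⟨continuousLinearMapOfTendsto T (tendsto_pi_nhds.2 hg), hg⟩

end ContinuousLinearMap

/-- Noncommutative monotone convergence: a nondecreasing sequence of nonnegative
self-adjoint trace-class operators with uniformly bounded traces converges weakly to a
nonnegative trace-class operator, and the traces converge.  The trace is expressed as the
sum of diagonal matrix elements in a Hilbert basis. -/
theorem stmt1 {H ι : Type*} [NormedAddCommGroup H] [InnerProductSpace ℂ H]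
    [CompleteSpace H]
    (e : HilbertBasis ι ℂ H)
    (T : ℕ → H →L[ℂ] H) (tr : ℕ → ℝ)
    (hpos : ∀ n, (T n).IsPositive)
    (hmono : ∀ n x, (⟪x, T n x⟫).re ≤ (⟪x, T (n + 1) x⟫).re)
    (htr : ∀ n, HasSum (fun i => (⟪e i, T n (e i)⟫).re) (tr n))
    (hbd : ∃ C : ℝ, ∀ n, tr n ≤ C) :
    ∃ (Tlim : H →L[ℂ] H) (trlim : ℝ),
      Tlim.IsPositive ∧
      HasSum (fun i => (⟪e i, Tlim (e i)⟫).re) trlim ∧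
      (∀ x y : H, Tendsto (fun n => ⟪x, T n y⟫) atTop (𝓝 ⟪x, Tlim y⟫)) ∧
      Tendsto tr atTop (𝓝 trlim) := by
  obtain ⟨C, hC⟩ := hbd
  have hT_mono : Monotone T := monotone_nat_of_le_succ fun n =>
    ContinuousLinearMap.le_of_forall_re_inner_le (hpos n).isSelfAdjoint
      (hpos (n + 1)).isSelfAdjoint (hmono n)
  have hT_bdd (n : ℕ) (z : H) : (⟪z, T n z⟫).re ≤ C * ‖z‖ ^ 2 :=
    ((hpos n).re_inner_le_of_hasSum e (htr n) z).trans (by gcongr; exact hC n)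
  obtain ⟨L, hL⟩ :=
    ContinuousLinearMap.exists_tendsto_apply_of_monotone hT_mono
      ((ContinuousLinearMap.nonneg_iff_isPositive _).2 (hpos 0)) hT_bdd
  have hweak (x y : H) : Tendsto (fun n => ⟪x, T n y⟫) atTop (𝓝 ⟪x, L y⟫) :=
    tendsto_const_nhds.inner (hL y)
  have htr_mono : Monotone tr := monotone_nat_of_le_succ fun n =>
    hasSum_le (fun i => hmono n (e i)) (htr n) (htr (n + 1))
  have htr_bdd : BddAbove (Set.range tr) := ⟨C, Set.forall_mem_range.2 hC⟩
  refine ⟨L, ⨆ n, tr n, ContinuousLinearMap.isPositive_of_tendsto_apply hpos hL, ?_, hweak,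
    tendsto_atTop_ciSup htr_mono htr_bdd⟩
  exact hasSum_iSup_of_monotone (fun n i => (hpos n).re_inner_nonneg_right (e i))
    (monotone_nat_of_le_succ fun n i => hmono n (e i))
    (fun i => (Complex.continuous_re.tendsto _).comp (hweak (e i) (e i))) htr htr_bdd
end

section
/- Let A = A* ≥ 0 be self-adjoint on a separable Hilbert space H with spectral measure E, define Φ_n(r) = r/(1 + r/n) and A_n = Φ_n(A). Let T be a nonnegative trace-class operator with finite energy Σ_j τ_j ∫₀^∞ λ ⟨e_j, E(dλ) e_j⟩ < ∞ (where T e_j = τ_j e_j). Then trace(T A_n) → trace(T^{1/2} A T^{1/2}) as n → ∞, and T^{1/2} A_n T^{1/2} → T^{1/2} A T^{1/2} in trace norm. -/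
open MeasureTheory Filter Topology
open scoped ComplexInnerProductSpace ENNReal

/-!
For `λ, s ≥ 0` the regularisation `Φ_s(λ) = λ / (1 + λ/s)` lies between `0` and `λ`, and it
tends to `λ` as `s → ∞`. Every weighted sum `Σ_j τ_j ∫ f dμ_{e_j}` is the integral of `f` against
the single measure `ν = Σ_j τ_j μ_{e_j}`, which is carried by `[0, ∞)` and integrates `λ` by the
finite-energy hypothesis; both limits are therefore dominated convergence for `ν`, with `λ` as
the dominating function.
-/

section Regularization

variable {l s : ℝ}

lemma div_one_add_div_nonneg (hl : 0 ≤ l) (hs : 0 ≤ s) : 0 ≤ l / (1 + l / s) := by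
  positivity

lemma div_one_add_div_le_self (hl : 0 ≤ l) (hs : 0 ≤ s) : l / (1 + l / s) ≤ l :=
  div_le_self hl (le_add_of_nonneg_right (by positivity))

lemma tendsto_div_one_add_div_atTop (l : ℝ) :
    Tendsto (fun s : ℝ => l / (1 + l / s)) atTop (𝓝 l) := by
  have h : Tendsto (fun s : ℝ => 1 + l / s) atTop (𝓝 (1 + 0)) :=
    tendsto_const_nhds.add (tendsto_const_nhds.div_atTop tendsto_id)
  simpa [Pi.div_def] using tendsto_const_nhds.div h (by norm_num : (1 : ℝ) + 0 ≠ 0)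

end Regularization

section Measure

variable {ν : Measure ℝ}

lemma lintegral_div_one_add_div_le (hν : ∀ᵐ l ∂ν, 0 ≤ l) {s : ℝ} (hs : 0 ≤ s) :
    ∫⁻ l, ENNReal.ofReal (l / (1 + l / s)) ∂ν ≤ ∫⁻ l, ENNReal.ofReal l ∂ν :=
  lintegral_mono_ae <| hν.mono fun _ hl =>
    ENNReal.ofReal_le_ofReal (div_one_add_div_le_self hl hs)

lemma tendsto_lintegral_div_one_add_div (hν : ∀ᵐ l ∂ν, 0 ≤ l)
    (hfin : ∫⁻ l, ENNReal.ofReal l ∂ν ≠ ⊤) :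
    Tendsto (fun s : ℝ => ∫⁻ l, ENNReal.ofReal (l / (1 + l / s)) ∂ν) atTop
      (𝓝 (∫⁻ l, ENNReal.ofReal l ∂ν)) := by
  refine tendsto_lintegral_filter_of_dominated_convergence _
    (Eventually.of_forall fun _ => by fun_prop) ?_ hfin
    (Eventually.of_forall fun l =>
      (ENNReal.continuous_ofReal.tendsto l).comp (tendsto_div_one_add_div_atTop l))
  filter_upwards [eventually_ge_atTop 0] with s hs
  exact hν.mono fun _ hl => ENNReal.ofReal_le_ofReal (div_one_add_div_le_self hl hs)

lemma tendsto_lintegral_sub_div_one_add_div (hν : ∀ᵐ l ∂ν, 0 ≤ l)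
    (hfin : ∫⁻ l, ENNReal.ofReal l ∂ν ≠ ⊤) :
    Tendsto (fun s : ℝ => ∫⁻ l, ENNReal.ofReal (l - l / (1 + l / s)) ∂ν) atTop (𝓝 0) := by
  have hlim (l : ℝ) : Tendsto (fun s : ℝ => ENNReal.ofReal (l - l / (1 + l / s))) atTop
      (𝓝 0) := by
    have h := (tendsto_const_nhds (x := l)).sub (tendsto_div_one_add_div_atTop l)
    rw [sub_self] at h
    simpa using ENNReal.tendsto_ofReal h
  have hbound : ∀ᶠ s in atTop, ∀ᵐ l ∂ν,
      ENNReal.ofReal (l - l / (1 + l / s)) ≤ ENNReal.ofReal l := by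
    filter_upwards [eventually_ge_atTop 0] with s hs
    exact hν.mono fun _ hl =>
      ENNReal.ofReal_le_ofReal (sub_le_self _ (div_one_add_div_nonneg hl hs))
  simpa using tendsto_lintegral_filter_of_dominated_convergence (f := 0) _
    (Eventually.of_forall fun _ => by fun_prop) hbound hfin (Eventually.of_forall hlim)

end Measure

lemma tsum_mul_lintegral_eq_lintegral_sum {α ι : Type*} [MeasurableSpace α] (w : ι → ℝ≥0∞)
    (μ : ι → Measure α) (f : α → ℝ≥0∞) :
    ∑' j, w j * ∫⁻ x, f x ∂μ j = ∫⁻ x, f x ∂(Measure.sum fun j => w j • μ j) := by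
  simp [lintegral_sum_measure, lintegral_smul_measure]

lemma tsum_mul_toReal_eq_toReal_tsum {ι : Type*} {w : ι → ℝ} (hw : ∀ j, 0 ≤ w j)
    {I : ι → ℝ≥0∞} (h : ∑' j, ENNReal.ofReal (w j) * I j ≠ ⊤) :
    ∑' j, w j * (I j).toReal = (∑' j, ENNReal.ofReal (w j) * I j).toReal := by
  simp [ENNReal.tsum_toReal_eq (ENNReal.ne_top_of_tsum_ne_top h), ENNReal.toReal_ofReal (hw _)]

theorem stmt15_general {H ι : Type*} [NormedAddCommGroup H] [InnerProductSpace ℂ H]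
    (e : HilbertBasis ι ℂ H)
    (μ : H → Measure ℝ)
    (hμsupp : ∀ x, μ x (Set.Iio 0) = 0)
    (τ : ι → ℝ) (hτ : ∀ j, 0 ≤ τ j)
    (henergy : (∑' j, ENNReal.ofReal (τ j) * ∫⁻ l, ENNReal.ofReal l ∂(μ (e j))) < ⊤)
    -- `A_n = Φ_n(A)` with `Φ_n(r) = r/(1 + r/n)`, via the functional calculus
    (An : ℕ → H →L[ℂ] H)
    (hAn : ∀ (n : ℕ) (x : H), (⟪x, An n x⟫).re =
      (∫⁻ l, ENNReal.ofReal (l / (1 + l / (n : ℝ))) ∂(μ x)).toReal) :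
    Tendsto (fun n => ∑' j, τ j * (⟪e j, An n (e j)⟫).re) atTop
        (𝓝 ((∑' j, ENNReal.ofReal (τ j) * ∫⁻ l, ENNReal.ofReal l ∂(μ (e j))).toReal)) ∧
      Tendsto (fun n =>
          ∑' j, ENNReal.ofReal (τ j) *
            ∫⁻ l, ENNReal.ofReal (l - l / (1 + l / (n : ℝ))) ∂(μ (e j))) atTop (𝓝 0) := by
  set ν := Measure.sum fun j => ENNReal.ofReal (τ j) • μ (e j)
  have hμ_nonneg (x : H) : ∀ᵐ l ∂μ x, 0 ≤ l :=
    (measure_eq_zero_iff_ae_notMem.1 (hμsupp x)).mono fun _ => Set.notMem_Iio.1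
  have hν : ∀ᵐ l ∂ν, 0 ≤ l := (Measure.ae_sum_iff' measurableSet_Ici).2 fun j =>
    Measure.ae_smul_measure (hμ_nonneg (e j)) _
  have hfin : ∫⁻ l, ENNReal.ofReal l ∂ν ≠ ⊤ := by
    rw [← tsum_mul_lintegral_eq_lintegral_sum]; exact henergy.ne
  have htrace (n : ℕ) : ∑' j, τ j * (⟪e j, An n (e j)⟫).re =
      (∫⁻ l, ENNReal.ofReal (l / (1 + l / (n : ℝ))) ∂ν).toReal := by
    simp_rw [hAn]
    rw [tsum_mul_toReal_eq_toReal_tsum hτ] <;> rw [tsum_mul_lintegral_eq_lintegral_sum]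
    exact ne_top_of_le_ne_top hfin (lintegral_div_one_add_div_le hν n.cast_nonneg)
  simp_rw [htrace, tsum_mul_lintegral_eq_lintegral_sum]
  exact ⟨(ENNReal.tendsto_toReal hfin).comp
      ((tendsto_lintegral_div_one_add_div hν hfin).comp tendsto_natCast_atTop_atTop),
    tendsto_lintegral_sub_div_one_add_div hν hfin⟩

/-- Monotone regularization of the energy: with `A = A* ≥ 0` self-adjoint (spectral
measure `E`, scalar spectral measures `μ x = ⟨x, E(·)x⟩` supported on `[0,∞)`),
`Φ_n(r) = r/(1 + r/n)`, `A_n = Φ_n(A)`, and `T ≥ 0` trace class with eigenbasis `(e_j)`,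
eigenvalues `(τ_j)` and finite energy `Σ_j τ_j ∫ λ dμ_{e_j} < ∞`, one has
`trace(T A_n) → trace(T^{1/2} A T^{1/2}) = Σ_j τ_j ∫ λ dμ_{e_j}` and
`T^{1/2} A_n T^{1/2} → T^{1/2} A T^{1/2}` in trace norm, i.e.
`trace(T^{1/2}(A − A_n)T^{1/2}) = Σ_j τ_j ∫ (λ − Φ_n(λ)) dμ_{e_j} → 0`. -/
theorem stmt15 {H ι : Type*} [NormedAddCommGroup H] [InnerProductSpace ℂ H]
    [CompleteSpace H]
    (e : HilbertBasis ι ℂ H)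
    (E : Set ℝ → (H →L[ℂ] H))
    (hproj : ∀ ω, MeasurableSet ω → IsSelfAdjoint (E ω) ∧ (E ω) ∘L (E ω) = E ω)
    (μ : H → Measure ℝ)
    (hμ : ∀ (x : H) (ω : Set ℝ), MeasurableSet ω →
      μ x ω = ENNReal.ofReal ((⟪x, E ω x⟫).re))
    (hμsupp : ∀ x, μ x (Set.Iio 0) = 0)
    (T : H →L[ℂ] H) (hT : T.IsPositive)
    (τ : ι → ℝ) (hτ : ∀ j, 0 ≤ τ j) (hTe : ∀ j, T (e j) = (τ j : ℂ) • e j)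
    (hTtr : Summable τ)
    (henergy : (∑' j, ENNReal.ofReal (τ j) * ∫⁻ l, ENNReal.ofReal l ∂(μ (e j))) < ⊤)
    -- `A_n = Φ_n(A)` with `Φ_n(r) = r/(1 + r/n)`, via the functional calculus
    (An : ℕ → H →L[ℂ] H)
    (hAn : ∀ (n : ℕ) (x : H), (⟪x, An n x⟫).re =
      (∫⁻ l, ENNReal.ofReal (l / (1 + l / (n : ℝ))) ∂(μ x)).toReal) :
    Tendsto (fun n => ∑' j, τ j * (⟪e j, An n (e j)⟫).re) atTop
        (𝓝 ((∑' j, ENNReal.ofReal (τ j) * ∫⁻ l, ENNReal.ofReal l ∂(μ (e j))).toReal)) ∧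
      Tendsto (fun n =>
          ∑' j, ENNReal.ofReal (τ j) *
            ∫⁻ l, ENNReal.ofReal (l - l / (1 + l / (n : ℝ))) ∂(μ (e j))) atTop (𝓝 0) :=
  stmt15_general e μ hμsupp τ hτ henergy An hAn
end
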